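/- Let K be a field of characteristic zero, s ∈ K invertible, q = s², and let R = R(q) be the quantum trigonometric R-matrix R(q) = 1 + Σ_{k,l}[(q-q⁻¹)θ(l-k) + ((s-s⁻¹)²/2)δ_{k,l}]E_{k,l}⊗E_{l,k}. Let S be an associative unital K-algebra, and let A, B be N×N matrices with entries in S satisfying: (a) R(q)·A₁·R^{t₁}(q)·A₂ = A₂·R^{t₁}(q)·A₁·R(q); (b) R(q)·B₁·B₂ = B₂·B₁·R(q); (c) A₂·B₁·R(q) = B₁·R^{t₂}(q⁻¹)·A₂; and the space-swapped versions of (c) obtained by conjugating with the permutation matrix P. Then the matrix Ã := B·A·Bᵀ also satisfies relation (a): R(q)·Ã₁·R^{t₁}(q)·Ã₂ = Ã₂·R^{t₁}(q)·Ã₁·R(q). -/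

import Mathlib

/-!
Since the entries of `R` are central, transposing a relation among `R`, `A₁, A₂, B₁, B₂`, or
partially transposing it in the first factor, keeps the order of the noncommuting entries of
`A` and `B`. Applied to (b) and (c) this gives the exchange relations of `Bᵀ` with `A`, `B` and
`R^{t₁}`; conjugating by `P`, which sends `R` to `Rᵀ` and fixes `R^{t₁}(q)` and `R^{t₂}(q⁻¹)`,
gives their space-swapped versions. With these, `R(q) R(q⁻¹) = 1` and the commutation of `R(q)`
with `R^{t₁}(q)` and `R^{t₂}(q⁻¹)`, both sides of the reflection equation for `B A Bᵀ` reduce to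
`B₂ B₁ R^{t₂}(q⁻¹) A₂ R^{t₁} A₁ R^{t₁} B₂ᵀ B₁ᵀ R`.
-/

open Matrix Kronecker

/-- The step function θ with values in a field: θ(x)=1 for x>0, θ(0)=1/2, θ(x)=0 for x<0. -/
noncomputable def thetaK (K : Type*) [Field K] (x : ℤ) : K :=
  if 0 < x then 1 else if x = 0 then 2⁻¹ else 0

/-- The quantum trigonometric R-matrix
`R(q) = 1 + Σ_{k,l} [(q-q⁻¹)θ(l-k) + ((s-s⁻¹)²/2)δ_{k,l}]·E_{k,l} ⊗ E_{l,k}`, with `q = s²`. -/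
noncomputable def Rq (N : ℕ) (K : Type*) [Field K] (q s : K) :
    Matrix (Fin N × Fin N) (Fin N × Fin N) K :=
  1 + ∑ k : Fin N, ∑ l : Fin N,
    ((q - q⁻¹) * thetaK K ((l : ℤ) - (k : ℤ))
        + (s - s⁻¹) ^ 2 / 2 * (if k = l then 1 else 0)) •
      (Matrix.single k l (1 : K) ⊗ₖ Matrix.single l k (1 : K))

/-- Embedding `X₁ = X ⊗ 1` into the first tensor factor, over a possibly
noncommutative ring. -/
def emb1 {N : ℕ} {S : Type*} [Ring S] (X : Matrix (Fin N) (Fin N) S) :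
    Matrix (Fin N × Fin N) (Fin N × Fin N) S :=
  Matrix.of fun p q => X p.1 q.1 * (if p.2 = q.2 then 1 else 0)

/-- Embedding `X₂ = 1 ⊗ X` into the second tensor factor. -/
def emb2 {N : ℕ} {S : Type*} [Ring S] (X : Matrix (Fin N) (Fin N) S) :
    Matrix (Fin N × Fin N) (Fin N × Fin N) S :=
  Matrix.of fun p q => (if p.1 = q.1 then 1 else 0) * X p.2 q.2

/-- Partial transpose in the first tensor factor. -/
def pt1 {N : ℕ} {S : Type*} [Ring S]
    (M : Matrix (Fin N × Fin N) (Fin N × Fin N) S) :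
    Matrix (Fin N × Fin N) (Fin N × Fin N) S :=
  Matrix.of fun p q => M (q.1, p.2) (p.1, q.2)

/-- Partial transpose in the second tensor factor. -/
def pt2 {N : ℕ} {S : Type*} [Ring S]
    (M : Matrix (Fin N × Fin N) (Fin N × Fin N) S) :
    Matrix (Fin N × Fin N) (Fin N × Fin N) S :=
  Matrix.of fun p q => M (p.1, q.2) (q.1, p.2)

/-- The permutation matrix `P_{(i,k),(j,l)} = δ_{i,l}·δ_{k,j}`. -/
def permMat (N : ℕ) (S : Type*) [Ring S] :
    Matrix (Fin N × Fin N) (Fin N × Fin N) S :=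
  Matrix.of fun p q => if p.1 = q.2 ∧ p.2 = q.1 then 1 else 0

section ExchangeMatrix

variable {n K : Type*} [DecidableEq n] [CommRing K]

/-- `1 + ∑ a b, f a b • E_ab ⊗ E_ba` -/
def exchangeMatrix (f : n → n → K) : Matrix (n × n) (n × n) K :=
  Matrix.of fun p q => (if p = q then 1 else 0) + if p.1 = q.2 ∧ p.2 = q.1 then f p.1 p.2 else 0

/-- `1 + ∑ a b, h a b • E_ab ⊗ E_ab` -/
def diagPairMatrix (h : n → n → K) : Matrix (n × n) (n × n) K :=
  Matrix.of fun p q => (if p = q then 1 else 0) + if p.1 = p.2 ∧ q.1 = q.2 then h p.1 q.1 else 0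

theorem submatrix_swap_exchangeMatrix (f : n → n → K) :
    (exchangeMatrix f).submatrix Prod.swap Prod.swap = (exchangeMatrix f)ᵀ := by
  ext ⟨a, b⟩ ⟨c, d⟩
  simp only [exchangeMatrix, Matrix.submatrix_apply, Matrix.transpose_apply, Matrix.of_apply,
    Prod.swap_prod_mk, Prod.mk.injEq]
  grind

variable [Fintype n]

theorem exchangeMatrix_mul_apply (f : n → n → K) (M : Matrix (n × n) (n × n) K)
    (p q : n × n) : (exchangeMatrix f * M) p q = M p q + f p.1 p.2 * M (p.2, p.1) q := by
  simp [exchangeMatrix, Matrix.mul_apply, add_mul, Finset.sum_add_distrib, ite_and,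
    Fintype.sum_prod_type, Prod.ext_iff]

theorem mul_exchangeMatrix_apply (f : n → n → K) (M : Matrix (n × n) (n × n) K)
    (p q : n × n) : (M * exchangeMatrix f) p q = M p q + M p (q.2, q.1) * f q.2 q.1 := by
  simp [exchangeMatrix, Matrix.mul_apply, mul_add, Finset.sum_add_distrib, ite_and,
    Fintype.sum_prod_type, Prod.ext_iff]

theorem exchangeMatrix_mul_exchangeMatrix {f g : n → n → K}
    (hadd : ∀ a b, a ≠ b → f a b + g a b = 0) (hmul : ∀ a b, a ≠ b → f a b * g b a = 0)
    (hdiag : ∀ a, (1 + f a a) * (1 + g a a) = 1) :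
    exchangeMatrix f * exchangeMatrix g = 1 := by
  ext ⟨a, b⟩ ⟨c, d⟩
  rw [exchangeMatrix_mul_apply]
  simp only [exchangeMatrix, Matrix.of_apply, Matrix.one_apply, Prod.mk.injEq]
  grind

theorem exchangeMatrix_commute_diagPairMatrix {f : n → n → K} (hf : ∀ a b, f a a = f b b)
    (h : n → n → K) : Commute (exchangeMatrix f) (diagPairMatrix h) := by
  ext ⟨a, b⟩ ⟨c, d⟩
  rw [exchangeMatrix_mul_apply, mul_exchangeMatrix_apply]
  simp only [diagPairMatrix, Matrix.of_apply, Prod.mk.injEq, add_right_inj]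
  grind

end ExchangeMatrix

section PartialTranspose

variable {N : ℕ} {K : Type*} [CommRing K]

theorem pt1_exchangeMatrix (f : Fin N → Fin N → K) :
    pt1 (exchangeMatrix f) = diagPairMatrix fun a b => f b a := by
  ext ⟨a, b⟩ ⟨c, d⟩
  simp only [pt1, exchangeMatrix, diagPairMatrix, Matrix.of_apply, Prod.mk.injEq]
  grind

theorem pt2_exchangeMatrix (f : Fin N → Fin N → K) :
    pt2 (exchangeMatrix f) = diagPairMatrix f := by
  ext ⟨a, b⟩ ⟨c, d⟩
  simp only [pt2, exchangeMatrix, diagPairMatrix, Matrix.of_apply, Prod.mk.injEq]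
  grind

end PartialTranspose

section Rq

variable {N : ℕ} {K : Type*} [Field K]

noncomputable def rqCoeff (q s : K) (k l : Fin N) : K :=
  (q - q⁻¹) * thetaK K ((l : ℤ) - (k : ℤ)) + (s - s⁻¹) ^ 2 / 2 * if k = l then 1 else 0

theorem Rq_eq_exchangeMatrix (q s : K) : Rq N K q s = exchangeMatrix (rqCoeff q s) := by
  ext ⟨a, b⟩ ⟨c, d⟩
  simp only [Rq, exchangeMatrix, rqCoeff, Matrix.add_apply, Matrix.one_apply, Matrix.of_apply,
    Matrix.sum_apply, Matrix.smul_apply, Matrix.kroneckerMap_apply, Matrix.single_apply,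
    smul_eq_mul, mul_ite, mul_one, mul_zero, ite_and]
  congr 1
  simp only [Finset.sum_ite_eq', Finset.mem_univ, if_true]
  grind

theorem rqCoeff_self_eq_rqCoeff_self (q s : K) (a b : Fin N) :
    rqCoeff q s a a = rqCoeff q s b b := by
  simp [rqCoeff]

theorem rqCoeff_add_rqCoeff_inv (q s : K) {a b : Fin N} (hab : a ≠ b) :
    rqCoeff q s a b + rqCoeff q⁻¹ s⁻¹ a b = 0 := by
  simp only [rqCoeff, if_neg hab, inv_inv]
  ring

theorem rqCoeff_mul_rqCoeff_swap (q s q' s' : K) {a b : Fin N} (hab : a ≠ b) :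
    rqCoeff q s a b * rqCoeff q' s' b a = 0 := by
  -- `θ(x) θ(-x) = 0` for `x ≠ 0`
  have : (a : ℤ) ≠ b := by exact_mod_cast Fin.val_ne_of_ne hab
  simp only [rqCoeff, thetaK, if_neg hab, if_neg (Ne.symm hab)]
  split_ifs <;> first | omega | simp

theorem one_add_rqCoeff_self {q s : K} (hq : q = s ^ 2) (hs : s ≠ 0) (h2 : (2 : K) ≠ 0)
    (a : Fin N) : 1 + rqCoeff q s a a = q := by
  simp only [rqCoeff, thetaK, sub_self, lt_self_iff_false, if_false, if_true, mul_one]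
  subst hq
  field_simp
  ring

theorem Rq_mul_Rq_inv {q s : K} (hq : q = s ^ 2) (hs : s ≠ 0) (h2 : (2 : K) ≠ 0) :
    Rq N K q s * Rq N K q⁻¹ s⁻¹ = 1 := by
  rw [Rq_eq_exchangeMatrix, Rq_eq_exchangeMatrix]
  refine exchangeMatrix_mul_exchangeMatrix (fun a b hab => rqCoeff_add_rqCoeff_inv q s hab)
    (fun a b hab => rqCoeff_mul_rqCoeff_swap _ _ _ _ hab) fun a => ?_
  rw [one_add_rqCoeff_self hq hs h2, one_add_rqCoeff_self (by rw [hq, inv_pow]) (inv_ne_zero hs) h2,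
    mul_inv_cancel₀ (by rw [hq]; exact pow_ne_zero 2 hs)]

theorem Rq_commute_pt1 (q s q' s' : K) : Commute (Rq N K q s) (pt1 (Rq N K q' s')) := by
  rw [Rq_eq_exchangeMatrix, Rq_eq_exchangeMatrix, pt1_exchangeMatrix]
  exact exchangeMatrix_commute_diagPairMatrix (rqCoeff_self_eq_rqCoeff_self q s) _

theorem Rq_commute_pt2 (q s q' s' : K) : Commute (Rq N K q s) (pt2 (Rq N K q' s')) := by
  rw [Rq_eq_exchangeMatrix, Rq_eq_exchangeMatrix, pt2_exchangeMatrix]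
  exact exchangeMatrix_commute_diagPairMatrix (rqCoeff_self_eq_rqCoeff_self q s) _

theorem submatrix_swap_Rq (q s : K) :
    (Rq N K q s).submatrix Prod.swap Prod.swap = (Rq N K q s)ᵀ := by
  rw [Rq_eq_exchangeMatrix, submatrix_swap_exchangeMatrix]

end Rq

theorem transpose_mul_of_mem_center_left {S m n o : Type*} [Ring S] [Fintype n]
    {M : Matrix m n S} (hM : ∀ i j, M i j ∈ Set.center S) (M' : Matrix n o S) :
    (M * M')ᵀ = M'ᵀ * Mᵀ := by
  ext i k
  simp only [Matrix.transpose_apply, Matrix.mul_apply]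
  exact Finset.sum_congr rfl fun j _ => ((Set.mem_center_iff.mp (hM k j)).comm _).eq

theorem transpose_mul_of_mem_center_right {S m n o : Type*} [Ring S] [Fintype n]
    {M' : Matrix n o S} (hM' : ∀ i j, M' i j ∈ Set.center S) (M : Matrix m n S) :
    (M * M')ᵀ = M'ᵀ * Mᵀ := by
  ext i k
  simp only [Matrix.transpose_apply, Matrix.mul_apply]
  exact Finset.sum_congr rfl fun j _ => ((Set.mem_center_iff.mp (hM' j i)).comm _).eq.symm

section TensorFactors

variable {N : ℕ} {S : Type*} [Ring S]
  (X Y : Matrix (Fin N) (Fin N) S) (M : Matrix (Fin N × Fin N) (Fin N × Fin N) S)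

def swapFactors :
    Matrix (Fin N × Fin N) (Fin N × Fin N) S ≃+* Matrix (Fin N × Fin N) (Fin N × Fin N) S :=
  reindexRingEquiv S (Equiv.prodComm (Fin N) (Fin N))

theorem swapFactors_apply (p q : Fin N × Fin N) : swapFactors M p q = M p.swap q.swap :=
  rfl

theorem permMat_mul_mul_permMat : permMat N S * M * permMat N S = swapFactors M := by
  ext ⟨a, b⟩ ⟨c, d⟩
  simp [permMat, swapFactors_apply, Matrix.mul_apply, Fintype.sum_prod_type, ite_and]

theorem swapFactors_swapFactors : swapFactors (swapFactors M) = M :=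
  rfl

theorem swapFactors_emb1 : swapFactors (emb1 X) = emb2 X := by
  ext p q
  simp [swapFactors_apply, emb1, emb2]

theorem swapFactors_emb2 : swapFactors (emb2 X) = emb1 X := by
  ext p q
  simp [swapFactors_apply, emb1, emb2]

theorem swapFactors_transpose : swapFactors Mᵀ = (swapFactors M)ᵀ :=
  rfl

theorem swapFactors_pt1 : swapFactors (pt1 M) = pt2 (swapFactors M) :=
  rfl

theorem swapFactors_pt2 : swapFactors (pt2 M) = pt1 (swapFactors M) :=
  rfl

theorem pt1_transpose : pt1 Mᵀ = pt2 M :=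
  rfl

theorem pt2_transpose : pt2 Mᵀ = pt1 M :=
  rfl

theorem pt1_pt2 : pt1 (pt2 M) = Mᵀ :=
  rfl

theorem emb1_mul_apply (p q : Fin N × Fin N) :
    (emb1 X * M) p q = ∑ j, X p.1 j * M (j, p.2) q := by
  simp [Matrix.mul_apply, emb1, Fintype.sum_prod_type]

theorem mul_emb1_apply (p q : Fin N × Fin N) :
    (M * emb1 X) p q = ∑ j, M p (j, q.2) * X j q.1 := by
  simp [Matrix.mul_apply, emb1, Fintype.sum_prod_type, eq_comm]

theorem emb2_mul_apply (p q : Fin N × Fin N) :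
    (emb2 X * M) p q = ∑ j, X p.2 j * M (p.1, j) q := by
  simp [Matrix.mul_apply, emb2, Fintype.sum_prod_type]

theorem mul_emb2_apply (p q : Fin N × Fin N) :
    (M * emb2 X) p q = ∑ j, M p (q.1, j) * X j q.2 := by
  simp [Matrix.mul_apply, emb2, Fintype.sum_prod_type, eq_comm]

theorem emb1_mul : emb1 (X * Y) = emb1 X * emb1 Y := by
  ext p q
  rw [emb1_mul_apply]
  simp [emb1, Matrix.mul_apply, Finset.sum_ite_irrel]

theorem emb2_mul : emb2 (X * Y) = emb2 X * emb2 Y := by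
  ext p q
  rw [emb2_mul_apply]
  simp [emb2, Matrix.mul_apply, Finset.sum_ite_irrel]

theorem transpose_emb1_mul_emb2 : (emb1 X * emb2 Y)ᵀ = emb1 Xᵀ * emb2 Yᵀ := by
  ext p q
  simp [mul_emb2_apply, emb1]

theorem transpose_emb2_mul_emb1 : (emb2 Y * emb1 X)ᵀ = emb2 Yᵀ * emb1 Xᵀ := by
  ext p q
  simp [mul_emb1_apply, emb2]

theorem pt1_mul_emb2 : pt1 (M * emb2 Y) = pt1 M * emb2 Y := by
  ext p q
  simp only [pt1, Matrix.of_apply, mul_emb2_apply]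

theorem pt1_emb2_mul : pt1 (emb2 Y * M) = emb2 Y * pt1 M := by
  ext p q
  simp only [pt1, Matrix.of_apply, emb2_mul_apply]

variable {X Y M}

theorem pt1_mul_emb1 (hM : ∀ p q, M p q ∈ Set.center S) :
    pt1 (M * emb1 X) = emb1 Xᵀ * pt1 M := by
  ext p q
  simp only [pt1, Matrix.of_apply, mul_emb1_apply, emb1_mul_apply, Matrix.transpose_apply]
  exact Finset.sum_congr rfl fun j _ => (Set.mem_center_iff.mp (hM _ _)).comm _

theorem pt1_emb1_mul (hM : ∀ p q, M p q ∈ Set.center S) :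
    pt1 (emb1 X * M) = pt1 M * emb1 Xᵀ := by
  ext p q
  simp only [pt1, Matrix.of_apply, mul_emb1_apply, emb1_mul_apply, Matrix.transpose_apply]
  exact Finset.sum_congr rfl fun j _ => ((Set.mem_center_iff.mp (hM _ _)).comm _).symm

theorem pt1_mul_emb1_mul_emb2 (hM : ∀ p q, M p q ∈ Set.center S) :
    pt1 (M * emb1 X * emb2 Y) = emb1 Xᵀ * pt1 M * emb2 Y := by
  rw [pt1_mul_emb2, pt1_mul_emb1 hM]

theorem pt1_emb2_mul_emb1_mul (hM : ∀ p q, M p q ∈ Set.center S) :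
    pt1 (emb2 Y * emb1 X * M) = emb2 Y * pt1 M * emb1 Xᵀ := by
  rw [Matrix.mul_assoc, pt1_emb2_mul, pt1_emb1_mul hM, Matrix.mul_assoc]

theorem pt1_emb1_mul_mul_emb2 (hM : ∀ p q, M p q ∈ Set.center S) :
    pt1 (emb1 X * M * emb2 Y) = pt1 M * emb1 Xᵀ * emb2 Y := by
  rw [pt1_mul_emb2, pt1_emb1_mul hM]

theorem transpose_mul_emb1_mul_emb2 (hM : ∀ p q, M p q ∈ Set.center S) :
    (M * emb1 X * emb2 Y)ᵀ = emb1 Xᵀ * emb2 Yᵀ * Mᵀ := by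
  rw [Matrix.mul_assoc, transpose_mul_of_mem_center_left hM, transpose_emb1_mul_emb2]

theorem transpose_emb2_mul_emb1_mul (hM : ∀ p q, M p q ∈ Set.center S) :
    (emb2 Y * emb1 X * M)ᵀ = Mᵀ * emb2 Yᵀ * emb1 Xᵀ := by
  rw [transpose_mul_of_mem_center_right hM, transpose_emb2_mul_emb1, Matrix.mul_assoc]

theorem rtt_transpose (hM : ∀ p q, M p q ∈ Set.center S) (hswap : swapFactors M = Mᵀ)
    (h : M * emb1 X * emb2 Y = emb2 Y * emb1 X * M) :
    M * emb1 Yᵀ * emb2 Xᵀ = emb2 Xᵀ * emb1 Yᵀ * M := by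
  have := congrArg (swapFactors ·ᵀ) h
  simp only [transpose_mul_emb1_mul_emb2 hM, transpose_emb2_mul_emb1_mul hM, map_mul,
    swapFactors_transpose, hswap, Matrix.transpose_transpose, swapFactors_emb1,
    swapFactors_emb2] at this
  exact this.symm

end TensorFactors

section UnitRq

variable {N : ℕ} {K : Type*} [Field K]

noncomputable def unitRq (S : Type*) [Ring S] [Algebra K S] {q s : K} (hq : q = s ^ 2)
    (hs : s ≠ 0) (h2 : (2 : K) ≠ 0) : (Matrix (Fin N × Fin N) (Fin N × Fin N) S)ˣ where
  val := (Rq N K q s).map (algebraMap K S)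
  inv := (Rq N K q⁻¹ s⁻¹).map (algebraMap K S)
  val_inv := by
    rw [← Matrix.map_mul, Rq_mul_Rq_inv hq hs h2, Matrix.map_one _ (map_zero _) (map_one _)]
  inv_val := by
    rw [← Matrix.map_mul, mul_eq_one_comm.mp (Rq_mul_Rq_inv hq hs h2),
      Matrix.map_one _ (map_zero _) (map_one _)]

theorem swapFactors_map_Rq {S : Type*} [Ring S] (f : K → S) (q s : K) :
    swapFactors ((Rq N K q s).map f) = ((Rq N K q s).map f)ᵀ :=
  congrArg (Matrix.map · f) (submatrix_swap_Rq q s)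

theorem swapFactors_pt1_map_Rq {S : Type*} [Ring S] (f : K → S) (q s : K) :
    swapFactors (pt1 ((Rq N K q s).map f)) = pt1 ((Rq N K q s).map f) := by
  rw [swapFactors_pt1, swapFactors_map_Rq, pt2_transpose]

theorem swapFactors_pt2_map_Rq {S : Type*} [Ring S] (f : K → S) (q s : K) :
    swapFactors (pt2 ((Rq N K q s).map f)) = pt2 ((Rq N K q s).map f) := by
  rw [swapFactors_pt2, swapFactors_map_Rq, pt1_transpose]

theorem map_Rq_commute_pt1 {S : Type*} [Ring S] (f : K →+* S) (q s q' s' : K) :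
    Commute ((Rq N K q s).map f) (pt1 ((Rq N K q' s').map f)) :=
  (Rq_commute_pt1 q s q' s').map f.mapMatrix

theorem map_Rq_commute_pt2 {S : Type*} [Ring S] (f : K →+* S) (q s q' s' : K) :
    Commute ((Rq N K q s).map f) (pt2 ((Rq N K q' s').map f)) :=
  (Rq_commute_pt2 q s q' s').map f.mapMatrix

end UnitRq

-- In the application `T = R^{t₁}`, `D = R^{t₂}(q⁻¹)`, `Rt = P R P = Rᵀ`, `aᵢ = Aᵢ`, `bᵢ = Bᵢ`
-- and `cᵢ = (Bᵀ)ᵢ`.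
theorem reflection_equation_conj {M : Type*} [Monoid M] (R Rt : Mˣ)
    {T D a₁ a₂ b₁ b₂ c₁ c₂ : M}
    (hRT : ↑R * T = T * R) (hRD : ↑R * D = D * R) (hRtT : ↑Rt * T = T * Rt)
    (ha : ↑R * a₁ * T * a₂ = a₂ * T * a₁ * R)
    (hb : ↑R * b₁ * b₂ = b₂ * b₁ * R) (hc : ↑R * c₁ * c₂ = c₂ * c₁ * R)
    (hab₁ : a₂ * b₁ * R = b₁ * D * a₂) (hab₂ : a₁ * b₂ * Rt = b₂ * D * a₁)
    (hac₁ : a₂ * T * c₁ = ↑Rt⁻¹ * c₁ * a₂) (hac₂ : a₁ * T * c₂ = ↑R⁻¹ * c₂ * a₁)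
    (hbc₁ : c₁ * T * b₂ = b₂ * T * c₁) (hbc₂ : c₂ * T * b₁ = b₁ * T * c₂) :
    ↑R * (b₁ * a₁ * c₁) * T * (b₂ * a₂ * c₂) = b₂ * a₂ * c₂ * T * (b₁ * a₁ * c₁) * R := by
  have hca₁ : c₁ * a₂ = Rt * a₂ * T * c₁ := by
    rw [mul_assoc (Rt : M) a₂, mul_assoc (Rt : M), hac₁, mul_assoc (↑Rt⁻¹ : M),
      Units.mul_inv_cancel_left]
  have hca₂ : c₂ * a₁ = R * a₁ * T * c₂ := by
    rw [mul_assoc (R : M) a₁, mul_assoc (R : M), hac₂, mul_assoc (↑R⁻¹ : M),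
      Units.mul_inv_cancel_left]
  have hab₁' : a₂ * b₁ = b₁ * D * a₂ * ↑R⁻¹ := by rw [← hab₁, Units.mul_inv_cancel_right]
  have hab₂' : a₁ * b₂ = b₂ * D * a₁ * ↑Rt⁻¹ := by rw [← hab₂, Units.mul_inv_cancel_right]
  have hTR : ↑R⁻¹ * T * R = T := by rw [mul_assoc, ← hRT, Units.inv_mul_cancel_left]
  have hTRt : ↑Rt⁻¹ * T * Rt = T := by rw [mul_assoc, ← hRtT, Units.inv_mul_cancel_left]
  calc ↑R * (b₁ * a₁ * c₁) * T * (b₂ * a₂ * c₂)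
      = R * b₁ * a₁ * (c₁ * T * b₂) * a₂ * c₂ := by ac_rfl
    _ = R * b₁ * a₁ * b₂ * T * (c₁ * a₂) * c₂ := by rw [hbc₁]; ac_rfl
    _ = R * b₁ * (a₁ * b₂) * T * Rt * a₂ * T * c₁ * c₂ := by rw [hca₁]; ac_rfl
    _ = R * b₁ * b₂ * D * a₁ * (↑Rt⁻¹ * T * Rt) * a₂ * T * c₁ * c₂ := by rw [hab₂']; ac_rfl
    _ = (R * b₁ * b₂) * D * a₁ * T * a₂ * T * c₁ * c₂ := by rw [hTRt]
    _ = b₂ * b₁ * (R * D) * a₁ * T * a₂ * T * c₁ * c₂ := by rw [hb]; ac_rfl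
    _ = b₂ * b₁ * D * (R * a₁ * T * a₂) * T * c₁ * c₂ := by rw [hRD]; ac_rfl
    _ = b₂ * b₁ * D * a₂ * T * a₁ * (R * T) * c₁ * c₂ := by rw [ha]; ac_rfl
    _ = b₂ * b₁ * D * a₂ * T * a₁ * T * (R * c₁ * c₂) := by rw [hRT]; ac_rfl
    _ = b₂ * b₁ * D * a₂ * T * a₁ * T * c₂ * c₁ * R := by rw [hc]; ac_rfl
    _ = b₂ * b₁ * D * a₂ * (↑R⁻¹ * T * R) * a₁ * T * c₂ * c₁ * R := by rw [hTR]
    _ = b₂ * (a₂ * b₁) * T * R * a₁ * T * c₂ * c₁ * R := by rw [hab₁']; ac_rfl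
    _ = b₂ * a₂ * b₁ * T * (c₂ * a₁) * c₁ * R := by rw [hca₂]; ac_rfl
    _ = b₂ * a₂ * (c₂ * T * b₁) * a₁ * c₁ * R := by rw [hbc₂]; ac_rfl
    _ = b₂ * a₂ * c₂ * T * (b₁ * a₁ * c₁) * R := by ac_rfl

theorem quantum_automorphism_general (N : ℕ)
    (K : Type*) [Field K] [CharZero K] (s : K) (hs : s ≠ 0) (q : K) (hq : q = s ^ 2)
    (S : Type*) [Ring S] [Algebra K S]
    (A B : Matrix (Fin N) (Fin N) S)
    (RS : Matrix (Fin N × Fin N) (Fin N × Fin N) S)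
    (RSi : Matrix (Fin N × Fin N) (Fin N × Fin N) S)
    (hRS : RS = (Rq N K q s).map (algebraMap K S))
    (hRSi : RSi = (Rq N K q⁻¹ s⁻¹).map (algebraMap K S))
    (ha : RS * emb1 A * pt1 RS * emb2 A = emb2 A * pt1 RS * emb1 A * RS)
    (hb : RS * emb1 B * emb2 B = emb2 B * emb1 B * RS)
    (hc : emb2 A * emb1 B * RS = emb1 B * pt2 RSi * emb2 A)
    (hc' : emb1 A * emb2 B * (permMat N S * RS * permMat N S)
        = emb2 B * (permMat N S * pt2 RSi * permMat N S) * emb1 A) :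
    RS * emb1 (B * A * Bᵀ) * pt1 RS * emb2 (B * A * Bᵀ)
      = emb2 (B * A * Bᵀ) * pt1 RS * emb1 (B * A * Bᵀ) * RS := by
  subst hRS hRSi
  let R : (Matrix (Fin N × Fin N) (Fin N × Fin N) S)ˣ := unitRq S hq hs two_ne_zero
  have hR : ∀ i j, (Rq N K q s).map (algebraMap K S) i j ∈ Set.center S :=
    fun _ _ => Set.algebraMap_mem_center _
  have hD : ∀ i j, pt2 ((Rq N K q⁻¹ s⁻¹).map (algebraMap K S)) i j ∈ Set.center S :=
    fun _ _ => Set.algebraMap_mem_center _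
  have hRT := (map_Rq_commute_pt1 (N := N) (algebraMap K S) q s q s).eq
  have hbc₁ := congrArg pt1 hb
  rw [pt1_mul_emb1_mul_emb2 hR, pt1_emb2_mul_emb1_mul hR] at hbc₁
  have hac₁ := congrArg pt1 hc
  rw [pt1_emb2_mul_emb1_mul hR, pt1_emb1_mul_mul_emb2 hD, pt1_pt2, ← swapFactors_map_Rq] at hac₁
  rw [permMat_mul_mul_permMat, permMat_mul_mul_permMat, swapFactors_pt2_map_Rq] at hc'
  have hRtT := congrArg swapFactors hRT
  have hac₂ := congrArg swapFactors hac₁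
  have hbc₂ := congrArg swapFactors hbc₁
  simp only [map_mul, swapFactors_pt1_map_Rq, swapFactors_emb1, swapFactors_emb2,
    swapFactors_swapFactors] at hRtT hac₂ hbc₂
  rw [emb1_mul, emb1_mul, emb2_mul, emb2_mul]
  exact reflection_equation_conj R (Units.map (swapFactors (N := N) (S := S)).toMonoidHom R)
    hRT (map_Rq_commute_pt2 (N := N) (algebraMap K S) q s q⁻¹ s⁻¹).eq hRtT ha hb
    (rtt_transpose hR (swapFactors_map_Rq _ q s) hb) hc hc' hac₁ hac₂ hbc₁ hbc₂

/-- quantum automorphism. If quantum matrices `A`, `B` satisfy the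
quantum reflection-type exchange relations (a), (b), (c) (and the space-swapped
version of (c)), then `Ã = B·A·Bᵀ` again satisfies relation (a). -/
theorem quantum_automorphism (N : ℕ) (hN : 1 ≤ N)
    (K : Type*) [Field K] [CharZero K] (s : K) (hs : s ≠ 0) (q : K) (hq : q = s ^ 2)
    (S : Type*) [Ring S] [Algebra K S]
    (A B : Matrix (Fin N) (Fin N) S)
    (RS : Matrix (Fin N × Fin N) (Fin N × Fin N) S)
    (RSi : Matrix (Fin N × Fin N) (Fin N × Fin N) S)
    (hRS : RS = (Rq N K q s).map (algebraMap K S))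
    (hRSi : RSi = (Rq N K q⁻¹ s⁻¹).map (algebraMap K S))
    (ha : RS * emb1 A * pt1 RS * emb2 A = emb2 A * pt1 RS * emb1 A * RS)
    (hb : RS * emb1 B * emb2 B = emb2 B * emb1 B * RS)
    (hc : emb2 A * emb1 B * RS = emb1 B * pt2 RSi * emb2 A)
    (hc' : emb1 A * emb2 B * (permMat N S * RS * permMat N S)
        = emb2 B * (permMat N S * pt2 RSi * permMat N S) * emb1 A) :
    RS * emb1 (B * A * Bᵀ) * pt1 RS * emb2 (B * A * Bᵀ)
      = emb2 (B * A * Bᵀ) * pt1 RS * emb1 (B * A * Bᵀ) * RS :=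
  quantum_automorphism_general N K s hs q hq S A B RS RSi hRS hRSi ha hb hc hc'
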